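/- Let γ > 0, c ∈ ℝ^d, and let f : ℝ^d → ℝ be continuously differentiable with gradient g : ℝ^d → ℝ^d satisfying f(ω) ≤ f(x) + ⟨g(x), ω − x⟩ + (γ/2)‖ω − x‖² for all x, ω ∈ ℝ^d, and suppose F := {ω : f(ω) ≤ 0} is bounded. Let (ω_k)_{k≥0} satisfy f(ω₀) ≤ 0 and, for every k, with q_k(ω) = f(ω_k) + ⟨g(ω_k), ω − ω_k⟩ + (γ/2)‖ω − ω_k‖², the point ω_{k+1} satisfies q_k(ω_{k+1}) ≤ 0 and ⟨c,ω⟩ ≤ ⟨c,ω_{k+1}⟩ for every ω with q_k(ω) ≤ 0. Suppose a subsequence (ω_{k_j}) converges to a point ω*, and assume that if ω* is not a local maximizer of ⟨c,·⟩ over F then there exists p ∈ ℝ^d with ⟨c,p⟩ > 0 and ⟨g(ω*),p⟩ < 0. Then ω* is a local maximizer of ⟨c,·⟩ over F. -/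
import Mathlib


open scoped RealInnerProductSpace

/-- `x` is a local maximizer of the linear objective `⟨c,·⟩` over the set `S`. -/
def IsLocalMaximizer {d : ℕ} (c : EuclideanSpace ℝ (Fin d))
    (S : Set (EuclideanSpace ℝ (Fin d))) (x : EuclideanSpace ℝ (Fin d)) : Prop :=
  x ∈ S ∧ ∃ δ > 0, ∀ ω ∈ S, ‖ω - x‖ ≤ δ → ⟪c, ω⟫ ≤ ⟪c, x⟫

/-- **Subsequential limits are local maximizers.** Any limit `ω*` of a convergent
subsequence of the iterates of the support-function algorithm (at which feasible ascent
directions exist whenever `ω*` is not a local maximizer) is a local maximizer of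
`⟨c,·⟩` over the feasible set `{f ≤ 0}`. -/
theorem stmt_6 {d : ℕ} (γ : ℝ) (hγ : 0 < γ) (c : EuclideanSpace ℝ (Fin d))
    (f : EuclideanSpace ℝ (Fin d) → ℝ)
    (g : EuclideanSpace ℝ (Fin d) → EuclideanSpace ℝ (Fin d))
    (hgrad : ∀ x, HasGradientAt f (g x) x) (hgcont : Continuous g)
    (hsupp : ∀ x ω, f ω ≤ f x + ⟪g x, ω - x⟫ + γ / 2 * ‖ω - x‖ ^ 2)
    (hbdd : Bornology.IsBounded {ω : EuclideanSpace ℝ (Fin d) | f ω ≤ 0})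
    (ω : ℕ → EuclideanSpace ℝ (Fin d)) (h0 : f (ω 0) ≤ 0)
    (hstep : ∀ k,
      (f (ω k) + ⟪g (ω k), ω (k + 1) - ω k⟫ + γ / 2 * ‖ω (k + 1) - ω k‖ ^ 2 ≤ 0) ∧
      ∀ x, f (ω k) + ⟪g (ω k), x - ω k⟫ + γ / 2 * ‖x - ω k‖ ^ 2 ≤ 0 →
        ⟪c, x⟫ ≤ ⟪c, ω (k + 1)⟫)
    (ωs : EuclideanSpace ℝ (Fin d)) (φ : ℕ → ℕ) (hφ : StrictMono φ)
    (hsub : Filter.Tendsto (fun j => ω (φ j)) Filter.atTop (nhds ωs))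
    (hascent : ¬ IsLocalMaximizer c {x | f x ≤ 0} ωs →
      ∃ p : EuclideanSpace ℝ (Fin d), 0 < ⟪c, p⟫ ∧ ⟪g ωs, p⟫ < 0) :
    IsLocalMaximizer c {x | f x ≤ 0} ωs := by
  by_contra hnot
  obtain ⟨p, hcp, hgp⟩ := hascent hnot
  -- feasibility of the iterates
  have hfeas : ∀ k, f (ω k) ≤ 0 := by
    intro k
    induction k with
    | zero => exact h0
    | succ k ih =>
      exact le_trans (hsupp (ω k) (ω (k + 1))) (hstep k).1
  -- monotonicity of the objective values
  have hmono : Monotone (fun k => ⟪c, ω k⟫) := by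
    apply monotone_nat_of_le_succ
    intro k
    apply (hstep k).2
    simp [hfeas k]
  have hp : p ≠ 0 := by
    intro h
    rw [h, inner_zero_right] at hcp
    exact lt_irrefl 0 hcp
  have hpn : (0:ℝ) < ‖p‖ ^ 2 := pow_pos (norm_pos_iff.mpr hp) 2
  set a : ℝ := ⟪g ωs, p⟫ with ha
  set t : ℝ := -a / (2 * γ * ‖p‖ ^ 2) with ht
  have htpos : 0 < t := by
    exact div_pos (by linarith) (mul_pos (by linarith) hpn)
  set ε : ℝ := t * ⟪c, p⟫ with hε
  have hεpos : 0 < ε := mul_pos htpos hcp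
  set L : ℝ := ⟪c, ωs⟫ with hL
  have hcc : Continuous (fun x : EuclideanSpace ℝ (Fin d) => ⟪c, x⟫) :=
    (innerSL ℝ c).continuous
  have hsubc : Filter.Tendsto (fun j => ⟪c, ω (φ j)⟫) Filter.atTop (nhds L) :=
    (hcc.tendsto ωs).comp hsub
  have hle : ∀ j, ⟪c, ω (φ j)⟫ ≤ L :=
    Monotone.ge_of_tendsto (fun i j hij => hmono (hφ.monotone hij)) hsubc
  -- eventually the gradient inner product is ≤ a/2 < 0
  have hgt : Filter.Tendsto (fun j => ⟪g (ω (φ j)), p⟫) Filter.atTop (nhds a) := by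
    have : Continuous (fun x : EuclideanSpace ℝ (Fin d) => ⟪g x, p⟫) :=
      (continuous_inner.comp (hgcont.prodMk continuous_const))
    exact (this.tendsto ωs).comp hsub
  have hev : ∀ᶠ j in Filter.atTop, ⟪g (ω (φ j)), p⟫ < a / 2 :=
    hgt.eventually_lt_const (by linarith)
  -- on that event, objective jumps by ε, so ⟪c, ω (φ j)⟫ ≤ L - ε
  have hkey : ∀ᶠ j in Filter.atTop, ⟪c, ω (φ j)⟫ ≤ L - ε := by
    filter_upwards [hev] with j hj
    set k := φ j with hk
    have hq : f (ω k) + ⟪g (ω k), (ω k + t • p) - ω k⟫ +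
        γ / 2 * ‖(ω k + t • p) - ω k‖ ^ 2 ≤ 0 := by
      have h1 : (ω k + t • p) - ω k = t • p := by abel
      rw [h1, inner_smul_right, norm_smul, Real.norm_eq_abs, abs_of_pos htpos, mul_pow]
      have h3 : γ / 2 * (t ^ 2 * ‖p‖ ^ 2) = t * (γ * t * ‖p‖ ^ 2 / 2) := by ring
      have h4 : γ * t * ‖p‖ ^ 2 = -a / 2 := by
        rw [ht]; field_simp
      have h5 : t * ⟪g (ω k), p⟫ ≤ t * (a / 2) :=
        mul_le_mul_of_nonneg_left (le_of_lt hj) (le_of_lt htpos)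
      have h6 : f (ω k) ≤ 0 := hfeas k
      have h7 : 0 < t * (-a / 4) := mul_pos htpos (by linarith)
      calc f (ω k) + t * ⟪g (ω k), p⟫ + γ / 2 * (t ^ 2 * ‖p‖ ^ 2)
          ≤ 0 + t * (a / 2) + t * (γ * t * ‖p‖ ^ 2 / 2) := by rw [h3]; linarith
        _ = t * (a / 2) + t * (-a / 4) := by rw [h4]; ring
        _ = t * (a / 4) := by ring
        _ ≤ 0 := by nlinarith
    have hjump : ⟪c, ω k⟫ + ε ≤ ⟪c, ω (k + 1)⟫ := by
      have := (hstep k).2 (ω k + t • p) hq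
      rwa [inner_add_right, inner_smul_right] at this
    have hnext : ⟪c, ω (k + 1)⟫ ≤ L := by
      have h8 : k + 1 ≤ φ (j + 1) := Nat.succ_le_of_lt (hφ (Nat.lt_succ_self j))
      calc ⟪c, ω (k + 1)⟫ ≤ ⟪c, ω (φ (j + 1))⟫ := hmono h8
        _ ≤ L := hle (j + 1)
    linarith
  have := le_of_tendsto hsubc hkey
  linarith
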